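/- arXiv:2111.00555 — 6 statements merged into one kernel-verified Lean document; each statement's English description precedes it below -/
import Mathlib

section
/- Let P be a real symmetric stochastic matrix (indexed by a finite set), i.e. P is symmetric, has nonnegative entries, and each row sums to 1. Then for every integer n ≥ 1, the matrix g_n := ∑_{k=2^n-2}^{2^{n+1}-3} P^k is positive semidefinite. -/
/-!
For a symmetric substochastic `P`, the form `xᵀ (1 + P) x` dominates `½ ∑ᵢⱼ Pᵢⱼ (xᵢ + xⱼ)² ≥ 0`,
so `1 + P` is positive semidefinite. The `2ⁿ` exponents of `gₙ` start at the even number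
`2ⁿ - 2` and so split into consecutive pairs `P^(2j) + P^(2j+1) = P^j (1 + P) P^j`,
each a congruence of `1 + P`.
-/

open Matrix Finset

namespace Matrix

section Substochastic

variable {ι : Type*} [Fintype ι] {P : Matrix ι ι ℝ}

theorem IsSymm.sum_mul_add_sq (hP : P.IsSymm) (x : ι → ℝ) :
    ∑ i, ∑ j, P i j * (x i + x j) ^ 2 = 2 * (∑ i, (∑ j, P i j) * x i ^ 2 + x ⬝ᵥ P *ᵥ x) := by
  have hswap : ∑ i, ∑ j, P i j * x j ^ 2 = ∑ i, (∑ j, P i j) * x i ^ 2 := by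
    rw [Finset.sum_comm]
    simp_rw [Finset.sum_mul, hP.apply]
  have hexpand : ∑ i, ∑ j, P i j * (x i + x j) ^ 2 =
      ∑ i, ∑ j, P i j * x i ^ 2 + ∑ i, ∑ j, P i j * x j ^ 2 +
        2 * ∑ i, ∑ j, x i * (P i j * x j) := by
    simp only [Finset.mul_sum, ← Finset.sum_add_distrib]
    exact Finset.sum_congr rfl fun i _ => Finset.sum_congr rfl fun j _ => by ring
  have hrowsum : ∑ i, ∑ j, P i j * x i ^ 2 = ∑ i, (∑ j, P i j) * x i ^ 2 := by
    simp_rw [Finset.sum_mul]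
  have hform : x ⬝ᵥ P *ᵥ x = ∑ i, ∑ j, x i * (P i j * x j) := by
    simp only [dotProduct, mulVec, Finset.mul_sum]
  rw [hexpand, hswap, hrowsum, hform]
  ring

theorem posSemidef_one_add_of_substochastic [DecidableEq ι] (hP : P.IsSymm)
    (hnonneg : ∀ i j, 0 ≤ P i j) (hrow : ∀ i, ∑ j, P i j ≤ 1) : (1 + P).PosSemidef := by
  refine PosSemidef.of_dotProduct_mulVec_nonneg ?_ fun x => ?_
  · simpa [isHermitian_iff_isSymm] using (isSymm_one (α := ℝ)).add hP
  have hsq : 0 ≤ ∑ i, ∑ j, P i j * (x i + x j) ^ 2 :=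
    Finset.sum_nonneg fun i _ => Finset.sum_nonneg fun j _ => mul_nonneg (hnonneg i j) (sq_nonneg _)
  have hdiag : ∑ i, (∑ j, P i j) * x i ^ 2 ≤ x ⬝ᵥ x := by
    simp only [dotProduct, ← sq]
    exact Finset.sum_le_sum fun i _ => mul_le_of_le_one_left (sq_nonneg _) (hrow i)
  rw [hP.sum_mul_add_sq] at hsq
  rw [star_trivial, add_mulVec, one_mulVec, dotProduct_add]
  linarith

end Substochastic

section PairedPowers

variable {ι R : Type*} [Fintype ι] [DecidableEq ι] [Ring R] [PartialOrder R] [StarRing R]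
  {A : Matrix ι ι R}

theorem IsHermitian.posSemidef_pow_two_mul_add_pow_two_mul_succ (hA : A.IsHermitian)
    (h : (1 + A).PosSemidef) (j : ℕ) : (A ^ (2 * j) + A ^ (2 * j + 1)).PosSemidef := by
  have hconj : A ^ (2 * j) + A ^ (2 * j + 1) = (A ^ j)ᴴ * (1 + A) * A ^ j := by
    rw [(hA.pow j).eq, mul_add, mul_one, add_mul, ← pow_add, ← pow_succ, ← pow_add]
    congr 2 <;> ring
  exact hconj ▸ h.conjTranspose_mul_mul_same _

theorem IsHermitian.posSemidef_sum_Ico_pow [StarOrderedRing R] (hA : A.IsHermitian)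
    (h : (1 + A).PosSemidef) (m L : ℕ) : (∑ k ∈ Ico (2 * m) (2 * m + 2 * L), A ^ k).PosSemidef := by
  induction L with
  | zero => simpa using PosSemidef.zero
  | succ L ih =>
    rw [show 2 * m + 2 * (L + 1) = 2 * (m + L) + 1 + 1 by ring,
      sum_Ico_succ_top (by omega), sum_Ico_succ_top (by omega), add_assoc,
      show 2 * (m + L) = 2 * m + 2 * L by ring]
    exact ih.add (by simpa [mul_add] using hA.posSemidef_pow_two_mul_add_pow_two_mul_succ h (m + L))

end PairedPowers

end Matrix

theorem finite_range_decomposition_posSemidef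
    {ι : Type*} [Fintype ι] [DecidableEq ι]
    (P : Matrix ι ι ℝ) (hsymm : P.IsSymm)
    (hnonneg : ∀ i j, 0 ≤ P i j)
    (hrow : ∀ i, ∑ j, P i j = 1)
    (n : ℕ) (hn : 1 ≤ n) :
    (∑ k ∈ Finset.Icc (2 ^ n - 2) (2 ^ (n + 1) - 3), P ^ k).PosSemidef := by
  obtain ⟨a, rfl⟩ : ∃ a, n = a + 1 := ⟨n - 1, by omega⟩
  have hpos : 1 ≤ 2 ^ a := Nat.one_le_two_pow
  have hIcc : Icc (2 ^ (a + 1) - 2) (2 ^ (a + 1 + 1) - 3) =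
      Ico (2 * (2 ^ a - 1)) (2 * (2 ^ a - 1) + 2 * 2 ^ a) := by
    rw [← Ico_add_one_right_eq_Icc, pow_succ, pow_succ]
    congr 1 <;> omega
  have hone_add := posSemidef_one_add_of_substochastic hsymm hnonneg fun i => (hrow i).le
  rw [hIcc]
  exact (isHermitian_iff_isSymm.mpr hsymm).posSemidef_sum_Ico_pow hone_add _ _
end

section
/- There is a sequence (c_n)_{n≥1} of positive real numbers such that for every group Γ with finite symmetric minimal generating set S of size D, the ball of radius n around the identity in the Cayley graph Cay(Γ, S) has at least c_n D^n elements, for every n ≥ 1. -/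
/-- The ball of radius `n` around the identity in the Cayley graph of a group
with generating set `S`: elements expressible as products of at most `n`
generators. -/
def cayleyBall {Γ : Type u} [Group Γ] (S : Finset Γ) (n : ℕ) : Set Γ :=
  {x | ∃ l : List Γ, (∀ g ∈ l, g ∈ S) ∧ l.length ≤ n ∧ l.prod = x}

/-- If `s ∉ B`, the ordered product over `B` lies in the closure of `S \ {s}`. -/
lemma aux_prod_mem {Γ : Type} [Group Γ] [DecidableEq Γ] (S : Finset Γ) (L : List Γ)
    (hLS : ∀ x ∈ L, x ∈ S) {B : Finset Γ} {s : Γ} (hsB : s ∉ B) :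
    (L.filter (· ∈ B)).prod ∈ Subgroup.closure ((S.erase s : Finset Γ) : Set Γ) := by
  apply Subgroup.list_prod_mem
  intro x hx
  rw [List.mem_filter] at hx
  apply Subgroup.subset_closure
  simp only [Finset.coe_erase, Set.mem_diff, Set.mem_singleton_iff, Finset.mem_coe]
  have hxB : x ∈ B := by simpa using hx.2
  exact ⟨hLS x hx.1, fun h => hsB (h ▸ hxB)⟩

lemma aux_subset {Γ : Type} [Group Γ] [DecidableEq Γ] (S : Finset Γ)
    (hind : ∀ s ∈ S, s ∉ Subgroup.closure ((S.erase s : Finset Γ) : Set Γ))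
    (L : List Γ) (hL : L.Nodup) (hLS : ∀ x ∈ L, x ∈ S) (hSL : ∀ x ∈ S, x ∈ L)
    {A B : Finset Γ} (hA : A ⊆ S)
    (hprod : (L.filter (· ∈ A)).prod = (L.filter (· ∈ B)).prod) : A ⊆ B := by
  intro s hsA
  by_contra hsB
  have hsS : s ∈ S := hA hsA
  apply hind s hsS
  set H := Subgroup.closure ((S.erase s : Finset Γ) : Set Γ)
  have hsl : s ∈ L.filter (· ∈ A) := by
    rw [List.mem_filter]
    exact ⟨hSL s hsS, by simpa using hsA⟩
  obtain ⟨l₁, l₂, hsplit⟩ := List.append_of_mem hsl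
  have hnd : (L.filter (· ∈ A)).Nodup := hL.filter _
  rw [hsplit, List.nodup_middle] at hnd
  have hs12 : s ∉ l₁ ++ l₂ := (List.nodup_cons.1 hnd).1
  have hmem : ∀ x ∈ l₁ ++ l₂, x ∈ H := by
    intro x hx
    apply Subgroup.subset_closure
    have hxL : x ∈ L.filter (· ∈ A) := by
      rw [hsplit]
      rcases List.mem_append.1 hx with h | h
      · exact List.mem_append.2 (Or.inl h)
      · exact List.mem_append.2 (Or.inr (List.mem_cons_of_mem _ h))
    rw [List.mem_filter] at hxL
    simp only [Finset.coe_erase, Set.mem_diff, Set.mem_singleton_iff, Finset.mem_coe]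
    exact ⟨hLS x hxL.1, fun h => hs12 (h ▸ hx)⟩
  have h1 : l₁.prod ∈ H := Subgroup.list_prod_mem _ fun x hx => hmem x (List.mem_append.2 (Or.inl hx))
  have h2 : l₂.prod ∈ H := Subgroup.list_prod_mem _ fun x hx => hmem x (List.mem_append.2 (Or.inr hx))
  have hB : (L.filter (· ∈ B)).prod ∈ H := aux_prod_mem S L hLS hsB
  have hprodA : (L.filter (· ∈ A)).prod = l₁.prod * (s * l₂.prod) := by
    rw [hsplit, List.prod_append, List.prod_cons]
  have : s = l₁.prod⁻¹ * (L.filter (· ∈ A)).prod * l₂.prod⁻¹ := by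
    rw [hprodA]; group
  rw [this, hprod]
  exact H.mul_mem (H.mul_mem (H.inv_mem h1) hB) (H.inv_mem h2)

/-- There is a universal sequence `(c_n)` of positive reals such that every
minimal Cayley graph of degree `D` satisfies `|B(o,n)| ≥ c_n D^n`. -/
theorem minimal_cayley_ball_growth :
    ∃ c : ℕ → ℝ, (∀ n, 1 ≤ n → 0 < c n) ∧
      ∀ (Γ : Type) (_ : Group Γ) (S : Finset Γ) (D : ℕ), S.card = D →
        (∀ s ∈ S, s⁻¹ ∈ S) →
        Subgroup.closure (S : Set Γ) = ⊤ →
        (∀ T : Finset Γ, T ⊂ S → Subgroup.closure (T : Set Γ) ≠ ⊤) →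
        ∀ n, 1 ≤ n →
          c n * (D : ℝ) ^ n ≤ (Nat.card (cayleyBall S n) : ℝ) := by
  classical
  refine ⟨fun n => ((2 * n : ℝ) ^ n * n.factorial)⁻¹, ?_, ?_⟩
  · intro n hn
    apply inv_pos.2
    apply mul_pos (pow_pos (by positivity) n)
    exact_mod_cast n.factorial_pos
  intro Γ _ S D hD hsymm hgen hmin n hn
  -- positivity of c n
  have hcpos : (0:ℝ) < ((2 * n : ℝ) ^ n * n.factorial)⁻¹ := by
    apply inv_pos.2
    apply mul_pos (pow_pos (by positivity) n)
    exact_mod_cast n.factorial_pos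
  -- independence
  have hind : ∀ s ∈ S, s ∉ Subgroup.closure ((S.erase s : Finset Γ) : Set Γ) := by
    intro s hs hmem
    apply hmin (S.erase s) (Finset.erase_ssubset hs)
    rw [eq_top_iff, ← hgen]
    rw [Subgroup.closure_le]
    intro t ht
    rcases eq_or_ne t s with rfl | hne
    · exact hmem
    · exact Subgroup.subset_closure (by simp [Finset.mem_erase, hne, ht])
  -- cayleyBall is finite
  have hfin : (cayleyBall S n).Finite := by
    have : cayleyBall S n ⊆ (fun l : List S => (l.map Subtype.val).prod) ''
        {l : List S | l.length ≤ n} := by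
      rintro x ⟨l, hlS, hlen, rfl⟩
      refine ⟨l.pmap (fun a h => (⟨a, h⟩ : S)) hlS, by simpa using hlen, ?_⟩
      simp [List.map_pmap]
    exact ((List.finite_length_le S n).image _).subset this
  -- nonempty
  have h1 : 1 ≤ Nat.card (cayleyBall S n) := by
    have : (1 : Γ) ∈ cayleyBall S n := ⟨[], by simp, by simp, by simp⟩
    rw [Nat.card_coe_set_eq]
    exact Nat.one_le_iff_ne_zero.2 (by
      intro h
      rw [Set.ncard_eq_zero hfin] at h
      rw [h] at this
      exact this)
  rcases lt_or_ge D (2 * n) with hcase | hcase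
  · -- small D
    calc ((2 * n : ℝ) ^ n * n.factorial)⁻¹ * (D : ℝ) ^ n
        ≤ ((2 * n : ℝ) ^ n * n.factorial)⁻¹ * (2 * n : ℝ) ^ n := by
          apply mul_le_mul_of_nonneg_left _ (le_of_lt hcpos)
          apply pow_le_pow_left₀ (by positivity)
          exact_mod_cast hcase.le
      _ = ((n.factorial : ℝ))⁻¹ := by
          rw [mul_comm ((2*(n:ℝ))^n) (n.factorial:ℝ), mul_inv, mul_assoc,
            inv_mul_cancel₀ (by positivity), mul_one]
      _ ≤ 1 := by
          apply inv_le_one_of_one_le₀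
          exact_mod_cast n.factorial_pos
      _ ≤ (Nat.card (cayleyBall S n) : ℝ) := by exact_mod_cast h1
  · -- large D : use choose bound
    have hnD : n ≤ D := le_trans (by omega) hcase
    -- injection from powersetCard
    set L := S.toList with hLdef
    have hLnd : L.Nodup := S.nodup_toList
    have hLS : ∀ x ∈ L, x ∈ S := fun x hx => (Finset.mem_toList).1 hx
    have hSL : ∀ x ∈ S, x ∈ L := fun x hx => (Finset.mem_toList).2 hx
    set F : Finset Γ → Γ := fun A => (L.filter (· ∈ A)).prod with hF
    have hinj : Set.InjOn F (S.powersetCard n : Finset (Finset Γ)) := by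
      intro A hA B hB hEq
      rw [Finset.mem_coe, Finset.mem_powersetCard] at hA hB
      exact le_antisymm (aux_subset S hind L hLnd hLS hSL hA.1 hEq)
        (aux_subset S hind L hLnd hLS hSL hB.1 hEq.symm)
    have hsub : ↑((S.powersetCard n).image F) ⊆ cayleyBall S n := by
      intro x hx
      simp only [Finset.coe_image, Set.mem_image, Finset.mem_coe] at hx
      obtain ⟨A, hA, rfl⟩ := hx
      rw [Finset.mem_powersetCard] at hA
      refine ⟨L.filter (· ∈ A), ?_, ?_, rfl⟩
      · intro g hg
        exact hLS g (List.mem_filter.1 hg).1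
      · have hnd : (L.filter (· ∈ A)).Nodup := hLnd.filter _
        have : (L.filter (· ∈ A)).toFinset = A := by
          ext x
          simp only [List.mem_toFinset, List.mem_filter, decide_eq_true_eq]
          constructor
          · rintro ⟨_, h⟩; exact h
          · intro h; exact ⟨hSL x (hA.1 h), h⟩
        have hlen := List.toFinset_card_of_nodup hnd
        rw [this, hA.2] at hlen
        omega
    have hcard : (D.choose n : ℝ) ≤ (Nat.card (cayleyBall S n) : ℝ) := by
      have h1' : ((S.powersetCard n).image F).card = D.choose n := by
        rw [Finset.card_image_of_injOn hinj, Finset.card_powersetCard, hD]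
      have := Set.ncard_le_ncard hsub hfin
      rw [Set.ncard_coe_finset, h1'] at this
      rw [Nat.card_coe_set_eq]
      exact_mod_cast this
    refine le_trans ?_ hcard
    have hchoose := Nat.pow_le_choose (α := ℝ) n D
    refine le_trans ?_ hchoose
    -- c n * D^n ≤ (D+1-n)^n / n!
    have hDn : (D : ℝ) / 2 ≤ ((D + 1 - n : ℕ) : ℝ) := by
      have h1 : n ≤ D + 1 := by omega
      rw [Nat.cast_sub h1]
      push_cast
      have : (2 * n : ℝ) ≤ D := by exact_mod_cast hcase
      linarith
    show ((2 * (n:ℝ)) ^ n * n.factorial)⁻¹ * (D : ℝ) ^ n ≤ ((D + 1 - n : ℕ) : ℝ) ^ n / n.factorial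
    rw [div_eq_mul_inv, mul_comm (((D + 1 - n : ℕ) : ℝ) ^ n)]
    rw [mul_inv, mul_comm (((2 * (n:ℝ)) ^ n)⁻¹), mul_assoc]
    apply mul_le_mul_of_nonneg_left _ (by positivity)
    calc ((2 * n : ℝ) ^ n)⁻¹ * (D:ℝ) ^ n ≤ ((2:ℝ) ^ n)⁻¹ * (D:ℝ)^n := by
          apply mul_le_mul_of_nonneg_right _ (by positivity)
          apply inv_anti₀ (by positivity)
          apply pow_le_pow_left₀ (by norm_num)
          have : (1:ℝ) ≤ n := by exact_mod_cast hn
          linarith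
      _ = ((D:ℝ)/2) ^ n := by rw [div_pow]; ring
      _ ≤ ((D + 1 - n : ℕ) : ℝ) ^ n := by
          apply pow_le_pow_left₀ (by positivity) hDn
end

section
/- Let Γ be a group with finite symmetric generating set S, let G = Cay(Γ,S), and let K ⊆ Γ be a finite nonempty set. Let r ≥ 1 be such that |B(o,r)| ≥ 2|K|, where B(o,r) is the ball of radius r around the identity. Then there exists a generator g ∈ S such that the number of x ∈ K with xg ∉ K is at least |K|/(2r). -/
/-!
Write `N g = exitCount K g` for the number of `x ∈ K` with `x * g ∉ K`. For fixed `x ∈ K` the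
map `g ↦ x * g` is injective, so `x * g ∈ K` for at most `|K| ≤ |B(o,r)| / 2` of the `g` in the
ball; double counting then gives some `g` in the ball with `N g ≥ |K| / 2`. The count `N` is
subadditive, since an exit of `x` under `g * h` is an exit of `x` under `g` or of `x * g` under
`h`; writing `g` as a word of at most `r` generators yields a generator `s` with `r * N s ≥ N g`.
-/

open scoped Classical

open Finset
open scoped Pointwise

section CayleyBall

variable {Γ : Type*} [Group Γ]

theorem mem_cayleyBall_iff {S : Finset Γ} {n : ℕ} {x : Γ} :
    x ∈ cayleyBall S n ↔ ∃ k ≤ n, x ∈ S ^ k := by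
  simp only [cayleyBall, Set.mem_ofPred_eq, Finset.mem_pow]
  constructor
  · rintro ⟨l, hlS, hlen, rfl⟩
    exact ⟨l.length, hlen, fun i => ⟨l.get i, hlS _ (l.get_mem i)⟩, by simp⟩
  · rintro ⟨k, hk, f, rfl⟩
    exact ⟨List.ofFn fun i => (f i : Γ), by simp, by simpa using hk, rfl⟩

theorem cayleyBall_eq_coe_biUnion_pow (S : Finset Γ) (n : ℕ) :
    cayleyBall S n = ↑((range (n + 1)).biUnion (S ^ ·)) := by
  ext x
  simp only [mem_cayleyBall_iff, coe_biUnion, coe_range, Set.mem_iUnion, Set.mem_Iio, mem_coe,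
    Nat.lt_succ_iff, exists_prop]

end CayleyBall

section ExitCount

variable {Γ : Type*} [Group Γ] (K : Finset Γ)

noncomputable def exitCount (g : Γ) : ℕ := #{x ∈ K | x * g ∉ K}

@[simp]
theorem exitCount_one : exitCount K 1 = 0 := by
  simp [exitCount]

theorem exitCount_mul_le (g h : Γ) : exitCount K (g * h) ≤ exitCount K g + exitCount K h := by
  have hsplit : {x ∈ K | x * (g * h) ∉ K} ⊆
      {x ∈ K | x * g ∉ K} ∪ {x ∈ K | x * g ∈ K ∧ x * g * h ∉ K} := by
    intro x hx
    by_cases hxg : x * g ∈ K <;> simp_all [mul_assoc]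
  have hsecond : #{x ∈ K | x * g ∈ K ∧ x * g * h ∉ K} ≤ exitCount K h := by
    refine card_le_card_of_injOn (· * g) (fun x hx => ?_) (fun x _ y _ => mul_right_cancel)
    simp_all
  calc exitCount K (g * h)
      ≤ #({x ∈ K | x * g ∉ K} ∪ {x ∈ K | x * g ∈ K ∧ x * g * h ∉ K}) := card_le_card hsplit
    _ ≤ exitCount K g + #{x ∈ K | x * g ∈ K ∧ x * g * h ∉ K} := card_union_le _ _
    _ ≤ exitCount K g + exitCount K h := by gcongr

theorem exitCount_list_prod_le (l : List Γ) :
    exitCount K l.prod ≤ (l.map (exitCount K)).sum := by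
  induction l with
  | nil => simp
  | cons s l ih =>
    rw [List.prod_cons, List.map_cons, List.sum_cons]
    exact (exitCount_mul_le K s l.prod).trans (by gcongr)

theorem exists_mem_exitCount_list_prod_le {l : List Γ} (hl : l ≠ []) :
    ∃ s ∈ l, exitCount K l.prod ≤ l.length * exitCount K s := by
  refine List.exists_le_of_sum_le hl _ _ ?_
  simp only [List.map_const', List.sum_replicate, smul_eq_mul, List.sum_map_mul_left]
  gcongr
  exact exitCount_list_prod_le K l

theorem card_le_card_add_card_filter_mul_notMem (B : Finset Γ) (x : Γ) :
    #B ≤ #K + #{g ∈ B | x * g ∉ K} := by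
  have hstay : #{g ∈ B | x * g ∈ K} ≤ #K :=
    card_le_card_of_injOn (x * ·) (fun g hg => (mem_filter.mp hg).2)
      (fun _ _ _ _ => mul_left_cancel)
  rw [← card_filter_add_card_filter_not (fun g => x * g ∈ K) (s := B)]
  omega

theorem exists_card_le_two_mul_exitCount {B : Finset Γ} (hB : B.Nonempty) (hBK : 2 * #K ≤ #B) :
    ∃ g ∈ B, #K ≤ 2 * exitCount K g := by
  have hdouble : ∑ g ∈ B, exitCount K g = ∑ x ∈ K, #{g ∈ B | x * g ∉ K} := by
    simp only [exitCount, card_filter]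
    exact sum_comm
  have hlower : #K * #B ≤ #K * #K + ∑ g ∈ B, exitCount K g := by
    rw [hdouble, ← smul_eq_mul, ← sum_const, ← smul_eq_mul, ← sum_const, ← sum_add_distrib]
    exact sum_le_sum fun x _ => card_le_card_add_card_filter_mul_notMem K B x
  refine exists_le_of_sum_le hB ?_
  rw [sum_const, smul_eq_mul, ← mul_sum]
  nlinarith

end ExitCount

theorem exit_generator_exists_general
    {Γ : Type*} [Group Γ] (S : Finset Γ)
    (K : Finset Γ) (hK : K.Nonempty)
    (r : ℕ)
    (hball : 2 * K.card ≤ Nat.card (cayleyBall S r)) :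
    ∃ g ∈ S, (K.card : ℝ) / (2 * r) ≤ ((K.filter (fun x => x * g ∉ K)).card : ℝ) := by
  set B := (range (r + 1)).biUnion (S ^ ·)
  have hBball : cayleyBall S r = B := cayleyBall_eq_coe_biUnion_pow S r
  rw [hBball, Nat.card_coe_set_eq, Set.ncard_coe_finset] at hball
  have hKpos : 0 < #K := hK.card_pos
  obtain ⟨g, hgB, hg⟩ := exists_card_le_two_mul_exitCount K (card_pos.mp (by omega)) hball
  obtain ⟨l, hlS, hlen, rfl⟩ : g ∈ cayleyBall S r := hBball ▸ hgB
  have hl : l ≠ [] := by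
    rintro rfl
    rw [List.prod_nil, exitCount_one] at hg
    omega
  obtain ⟨s, hsl, hs⟩ := exists_mem_exitCount_list_prod_le K hl
  have hr : 0 < r := (List.length_pos_iff.mpr hl).trans_le hlen
  have hcount : #K ≤ 2 * r * exitCount K s :=
    calc #K ≤ 2 * exitCount K l.prod := hg
      _ ≤ 2 * (l.length * exitCount K s) := by gcongr
      _ ≤ 2 * r * exitCount K s := by rw [← mul_assoc]; gcongr
  refine ⟨s, hlS s hsl, ?_⟩
  rw [div_le_iff₀ (by positivity)]
  exact_mod_cast hcount.trans_eq (mul_comm _ _)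

/-- If `|B(o,r)| ≥ 2|K|`, then some generator `g ∈ S` moves at least
`|K|/(2r)` elements of `K` out of `K`. -/
theorem exit_generator_exists
    {Γ : Type*} [Group Γ] (S : Finset Γ)
    (hsymm : ∀ s ∈ S, s⁻¹ ∈ S)
    (hgen : Subgroup.closure (S : Set Γ) = ⊤)
    (K : Finset Γ) (hK : K.Nonempty)
    (r : ℕ) (hr : 1 ≤ r)
    (hball : 2 * K.card ≤ Nat.card (cayleyBall S r)) :
    ∃ g ∈ S, (K.card : ℝ) / (2 * r) ≤ ((K.filter (fun x => x * g ∉ K)).card : ℝ) :=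
  exit_generator_exists_general S K hK r hball
end

section
/- Let Γ be an infinite group with finite symmetric generating set S of size D, and define, for m ≥ 1, R(m) := min{ n ≥ 1 : |B(o,n)| ≥ m }. Then for every finite nonempty set K ⊆ Γ, the inner vertex boundary satisfies |∂_V K| / |K| ≥ 1 / (2 R(2|K|)). -/
/-!
Write `exitSet K g` for the points of `K` that right multiplication by `g` moves out of `K`.
Its size is subadditive in `g` and at most `|∂_V K|` on generators, so it is at most `n |∂_V K|`
on the ball of radius `n`. On the other hand, for each `x ∈ K` at most `|K|` elements `g` of the
ball keep `x g` inside `K`; so if the ball has at least `2 |K|` elements, averaging over it gives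
an element `g` with `|K| / 2 ≤ |exitSet K g| ≤ n |∂_V K|`.
-/

open scoped Classical

/-- The inverse growth function `R(m) = min{n ≥ 1 : |B(o,n)| ≥ m}`. -/
noncomputable def invGrowth {Γ : Type u} [Group Γ] (S : Finset Γ) (m : ℕ) : ℕ :=
  sInf {n : ℕ | 1 ≤ n ∧ m ≤ Nat.card (cayleyBall S n)}

open Finset

section Exit

variable {Γ : Type*} [Group Γ]

noncomputable def exitSet (K : Finset Γ) (g : Γ) : Finset Γ := K.filter (fun x => x * g ∉ K)

noncomputable def vertexBoundary (S K : Finset Γ) : Finset Γ :=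
  K.filter (fun x => ∃ s ∈ S, x * s ∉ K)

variable {S K : Finset Γ}

lemma card_exitSet_mul_le (K : Finset Γ) (g h : Γ) :
    #(exitSet K (g * h)) ≤ #(exitSet K g) + #(exitSet K h) := by
  have hsplit :
      exitSet K (g * h) ⊆ exitSet K g ∪ K.filter (fun x => x * g ∈ K ∧ x * g * h ∉ K) := by
    intro x hx
    simp only [exitSet, mem_filter, mem_union, ← mul_assoc] at hx ⊢
    tauto
  have hshift : #(K.filter (fun x => x * g ∈ K ∧ x * g * h ∉ K)) ≤ #(exitSet K h) :=
    card_le_card_of_injOn (· * g) (fun x hx => by simp_all [exitSet])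
      (fun _ _ _ _ => mul_right_cancel)
  exact (card_le_card hsplit).trans ((card_union_le _ _).trans (by omega))

lemma exitSet_subset_vertexBoundary {s : Γ} (hs : s ∈ S) : exitSet K s ⊆ vertexBoundary S K :=
  fun x hx => by
    simp only [exitSet, vertexBoundary, mem_filter] at hx ⊢
    exact ⟨hx.1, s, hs, hx.2⟩

lemma card_exitSet_prod_le {l : List Γ} (hl : ∀ s ∈ l, s ∈ S) :
    #(exitSet K l.prod) ≤ l.length * #(vertexBoundary S K) := by
  induction l with
  | nil => simp [exitSet]
  | cons s l ih =>
    rw [List.prod_cons, List.length_cons, add_one_mul]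
    have hs := card_le_card (exitSet_subset_vertexBoundary (K := K) (hl s (by simp)))
    have ht := ih fun t ht => hl t (List.mem_cons_of_mem s ht)
    have := card_exitSet_mul_le K s l.prod
    omega

lemma card_exitSet_le_of_mem_cayleyBall {g : Γ} {n : ℕ} (hg : g ∈ cayleyBall S n) :
    #(exitSet K g) ≤ n * #(vertexBoundary S K) := by
  obtain ⟨l, hl, hlen, rfl⟩ := hg
  exact (card_exitSet_prod_le hl).trans (Nat.mul_le_mul_right _ hlen)

lemma card_mul_card_le_sum_card_exitSet (K F : Finset Γ) :
    #F * #K ≤ #K * #K + ∑ g ∈ F, #(exitSet K g) := by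
  set r : Γ → Γ → Prop := fun x g => x * g ∈ K
  have hkeep : ∑ g ∈ F, #(K.bipartiteBelow r g) ≤ #K * #K := by
    rw [← sum_card_bipartiteAbove_eq_sum_card_bipartiteBelow, ← smul_eq_mul, ← sum_const]
    refine sum_le_sum fun x _ => card_le_card_of_injOn (x * ·) (fun g hg => ?_)
      (fun _ _ _ _ => mul_left_cancel)
    exact (mem_filter.mp hg).2
  have hsplit : #F * #K = ∑ g ∈ F, (#(K.bipartiteBelow r g) + #(exitSet K g)) := by
    rw [← smul_eq_mul, ← sum_const]
    exact sum_congr rfl fun g _ => (card_filter_add_card_filter_not _).symm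
  rw [hsplit, sum_add_distrib]
  omega

lemma card_le_two_mul_mul_card_vertexBoundary {n : ℕ} (hK : K.Nonempty)
    (hball : 2 * #K ≤ Nat.card (cayleyBall S n)) :
    #K ≤ 2 * n * #(vertexBoundary S K) := by
  have hKpos : 0 < #K := hK.card_pos
  rw [Nat.card_coe_set_eq] at hball
  have hfin : (cayleyBall S n).Finite := Set.finite_of_ncard_pos (by omega)
  set F := hfin.toFinset
  have hF : 2 * #K ≤ #F := by rwa [← Set.ncard_eq_toFinset_card _ hfin]
  have hexit : ∑ g ∈ F, #(exitSet K g) ≤ #F * (n * #(vertexBoundary S K)) := by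
    rw [← smul_eq_mul]
    exact sum_le_card_nsmul _ _ _ fun g hg =>
      card_exitSet_le_of_mem_cayleyBall (hfin.mem_toFinset.mp hg)
  have hcount := card_mul_card_le_sum_card_exitSet K F
  refine Nat.le_of_mul_le_mul_left ?_ (show 0 < #F by omega)
  nlinarith [Nat.mul_le_mul_right #K hF]

end Exit

theorem vertex_isoperimetry_general
    {Γ : Type*} [Group Γ] (S : Finset Γ)
    (K : Finset Γ) (hK : K.Nonempty) :
    (1 : ℝ) / (2 * invGrowth S (2 * K.card)) ≤
      ((K.filter (fun x => ∃ s ∈ S, x * s ∉ K)).card : ℝ) / K.card := by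
  set n := invGrowth S (2 * #K)
  -- If no ball is large enough, `n = sInf ∅ = 0` and the left side is the junk value `1 / 0 = 0`,
  -- matching `R = ∞`.
  rcases Nat.eq_zero_or_pos n with hn | hn
  · rw [hn, Nat.cast_zero, mul_zero, div_zero]
    positivity
  have hball : 2 * #K ≤ Nat.card (cayleyBall S n) :=
    (Nat.sInf_mem (Nat.nonempty_of_pos_sInf hn)).2
  have hbound : #K ≤ 2 * n * #(vertexBoundary S K) :=
    card_le_two_mul_mul_card_vertexBoundary hK hball
  rw [div_le_div_iff₀ (by positivity) (by simpa using hK.card_pos), one_mul]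
  exact_mod_cast hbound.trans_eq (mul_comm _ _)

/-- Vertex isoperimetric inequality for Cayley graphs (Lyons--Morris--Schramm):
`|∂_V K| / |K| ≥ 1 / (2 R(2|K|))`. -/
theorem vertex_isoperimetry
    {Γ : Type*} [Group Γ] [Infinite Γ] (S : Finset Γ) (D : ℕ) (hD : S.card = D)
    (hsymm : ∀ s ∈ S, s⁻¹ ∈ S)
    (hgen : Subgroup.closure (S : Set Γ) = ⊤)
    (K : Finset Γ) (hK : K.Nonempty) :
    (1 : ℝ) / (2 * invGrowth S (2 * K.card)) ≤
      ((K.filter (fun x => ∃ s ∈ S, x * s ∉ K)).card : ℝ) / K.card :=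
  vertex_isoperimetry_general S K hK
end

section
/- Let D ≥ 4 and suppose the degree-D graph structure near the identity of a minimal Cayley graph satisfies: every vertex in the sphere S_1 of radius 1 has at least D - 2 neighbours in the sphere S_2 of radius 2, and every vertex in S_2 has at most 4 neighbours in S_1. Then for the simple random walk (X_n) started at the identity o, one has ∑_{z ∈ S_1} p_3(o,z) ≤ 6/D, and consequently p_4(o,o) ≤ 6/D². -/
open scoped Classical

lemma sum_inv_of_symm {Γ : Type*} [Group Γ] {M : Type*} [AddCommMonoid M]
    (S : Finset Γ) (hsymm : ∀ s ∈ S, s⁻¹ ∈ S) (f : Γ → M) :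
    ∑ s ∈ S, f s⁻¹ = ∑ s ∈ S, f s := by
  refine Finset.sum_bij' (fun s _ => s⁻¹) (fun s _ => s⁻¹) ?_ ?_ ?_ ?_ ?_ <;>
    simp_all

/-- Local structure of a minimal Cayley graph near the identity: if every
generator has at least `D - 2` neighbours in the sphere `S₂` of radius `2`,
and every vertex of `S₂` has at most `4` neighbours in the sphere `S₁ = S`,
then `∑_{z ∈ S₁} p₃(o,z) ≤ 6/D` and `p₄(o,o) ≤ 6/D²`. -/
theorem local_return_probability_bound
    {Γ : Type*} [Group Γ] (S : Finset Γ) (D : ℕ) (hD : S.card = D) (hD4 : 4 ≤ D)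
    (hsymm : ∀ s ∈ S, s⁻¹ ∈ S) (hone : (1 : Γ) ∉ S)
    (S₂ : Finset Γ)
    (hS₂a : ∀ g ∈ S, D - 2 ≤ (S.filter (fun s => g * s ∈ S₂)).card)
    (hS₂b : ∀ v ∈ S₂, (S.filter (fun s => v * s ∈ S)).card ≤ 4)
    (p : ℕ → Γ → Γ → ℝ)
    (hp0 : ∀ x y, p 0 x y = if x = y then 1 else 0)
    (hCK : ∀ n x y, p (n + 1) x y = (1 / D) * ∑ s ∈ S, p n x (y * s⁻¹)) :
    (∑ z ∈ S, p 3 1 z ≤ 6 / D) ∧ p 4 1 1 ≤ 6 / (D : ℝ) ^ 2 := by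
  have hDpos : (0:ℝ) < D := by exact_mod_cast Nat.lt_of_lt_of_le (by norm_num) hD4
  -- p₁
  have hp1 : ∀ u, p 1 1 u = if u ∈ S then (1 / D : ℝ) else 0 := by
    intro u
    rw [hCK]
    have : ∀ s ∈ S, p 0 1 (u * s⁻¹) = if s = u then (1:ℝ) else 0 := by
      intro s _
      rw [hp0]
      by_cases h : s = u
      · subst h; simp
      · rw [if_neg h, if_neg]
        intro he
        exact h (by rw [mul_inv_eq_one.mp he.symm])
    rw [Finset.sum_congr rfl this, Finset.sum_ite_eq' S u (fun _ => (1:ℝ))]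
    by_cases h : u ∈ S <;> simp [h]
  -- p₂ bounds
  have hp2_le : ∀ v, p 2 1 v ≤ 1 / D := by
    intro v
    rw [hCK]
    have hb : ∑ s ∈ S, p 1 1 (v * s⁻¹) ≤ 1 := by
      calc ∑ s ∈ S, p 1 1 (v * s⁻¹) ≤ ∑ s ∈ S, (1 / D : ℝ) := by
            refine Finset.sum_le_sum fun s _ => ?_
            rw [hp1]; split_ifs
            · exact le_rfl
            · positivity
        _ = 1 := by
            rw [Finset.sum_const, hD, nsmul_eq_mul]
            field_simp
    calc (1 / D : ℝ) * ∑ s ∈ S, p 1 1 (v * s⁻¹) ≤ (1 / D) * 1 :=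
          mul_le_mul_of_nonneg_left hb (by positivity)
      _ = 1 / D := mul_one _
  have hp2_S₂ : ∀ v ∈ S₂, p 2 1 v ≤ 4 / D ^ 2 := by
    intro v hv
    rw [hCK]
    have h1 : ∑ s ∈ S, p 1 1 (v * s⁻¹) =
        ((S.filter (fun s => v * s ∈ S)).card : ℝ) * (1 / D) := by
      have h2 := sum_inv_of_symm S hsymm (fun s => p 1 1 (v * s))
      rw [h2, Finset.sum_congr rfl (fun s _ => hp1 (v * s)),
        ← Finset.sum_filter, Finset.sum_const, nsmul_eq_mul]
    rw [h1]
    have h3 : ((S.filter (fun s => v * s ∈ S)).card : ℝ) ≤ 4 := by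
      exact_mod_cast hS₂b v hv
    calc (1 / D : ℝ) * (((S.filter (fun s => v * s ∈ S)).card : ℝ) * (1 / D))
        ≤ (1 / D) * (4 * (1 / D)) := by
          refine mul_le_mul_of_nonneg_left ?_ (by positivity)
          exact mul_le_mul_of_nonneg_right h3 (by positivity)
      _ = 4 / D ^ 2 := by field_simp
  -- key per-z bound
  have hkey : ∀ z ∈ S, ∑ s ∈ S, p 2 1 (z * s) ≤ 6 / D := by
    intro z hz
    have hAcard : D - 2 ≤ (S.filter (fun s => z * s ∈ S₂)).card := hS₂a z hz
    have hAle : (S.filter (fun s => z * s ∈ S₂)).card ≤ D := by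
      rw [← hD]; exact Finset.card_filter_le _ _
    have hsplit := Finset.sum_filter_add_sum_filter_not S (fun s => z * s ∈ S₂)
      (fun s => p 2 1 (z * s))
    have hAc : (S.filter (fun s => ¬ z * s ∈ S₂)).card ≤ 2 := by
      have h := Finset.card_filter_add_card_filter_not (s := S)
        (p := fun s => z * s ∈ S₂)
      rw [hD] at h
      omega
    have h1 : ∑ s ∈ S.filter (fun s => z * s ∈ S₂), p 2 1 (z * s) ≤
        ((S.filter (fun s => z * s ∈ S₂)).card : ℝ) * (4 / D ^ 2) := by
      have := Finset.sum_le_card_nsmul (S.filter (fun s => z * s ∈ S₂))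
        (fun s => p 2 1 (z * s)) (4 / D ^ 2)
        (fun s hs => hp2_S₂ _ (Finset.mem_filter.mp hs).2)
      rwa [nsmul_eq_mul] at this
    have h2 : ∑ s ∈ S.filter (fun s => ¬ z * s ∈ S₂), p 2 1 (z * s) ≤
        ((S.filter (fun s => ¬ z * s ∈ S₂)).card : ℝ) * (1 / D) := by
      have := Finset.sum_le_card_nsmul (S.filter (fun s => ¬ z * s ∈ S₂))
        (fun s => p 2 1 (z * s)) (1 / D) (fun s _ => hp2_le _)
      rwa [nsmul_eq_mul] at this
    have hA4 : ((S.filter (fun s => z * s ∈ S₂)).card : ℝ) * (4 / D ^ 2) ≤ 4 / D := by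
      have : ((S.filter (fun s => z * s ∈ S₂)).card : ℝ) ≤ D := by exact_mod_cast hAle
      calc ((S.filter (fun s => z * s ∈ S₂)).card : ℝ) * (4 / D ^ 2) ≤ D * (4 / D ^ 2) :=
            mul_le_mul_of_nonneg_right this (by positivity)
        _ = 4 / D := by field_simp
    have hc2 : ((S.filter (fun s => ¬ z * s ∈ S₂)).card : ℝ) * (1 / D) ≤ 2 / D := by
      have : ((S.filter (fun s => ¬ z * s ∈ S₂)).card : ℝ) ≤ 2 := by exact_mod_cast hAc
      calc _ ≤ (2:ℝ) * (1 / D) := mul_le_mul_of_nonneg_right this (by positivity)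
        _ = 2 / D := by ring
    calc ∑ s ∈ S, p 2 1 (z * s)
        = ∑ s ∈ S.filter (fun s => z * s ∈ S₂), p 2 1 (z * s) + ∑ s ∈ S.filter (fun s => ¬ z * s ∈ S₂), p 2 1 (z * s) := hsplit.symm
      _ ≤ 4 / D + 2 / D := add_le_add (h1.trans hA4) (h2.trans hc2)
      _ = 6 / D := by ring
  -- part 1
  have part1 : ∑ z ∈ S, p 3 1 z ≤ 6 / D := by
    have h1 : ∑ z ∈ S, p 3 1 z = (1 / D) * ∑ z ∈ S, ∑ s ∈ S, p 2 1 (z * s) := by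
      rw [Finset.mul_sum]
      refine Finset.sum_congr rfl fun z hz => ?_
      rw [hCK]
      congr 1
      exact sum_inv_of_symm S hsymm (fun s => p 2 1 (z * s))
    rw [h1]
    have h2 : ∑ z ∈ S, ∑ s ∈ S, p 2 1 (z * s) ≤ D * (6 / D) := by
      refine (Finset.sum_le_card_nsmul S _ _ fun z hz => hkey z hz).trans_eq ?_
      rw [hD, nsmul_eq_mul]
    calc (1 / D : ℝ) * ∑ z ∈ S, ∑ s ∈ S, p 2 1 (z * s)
        ≤ (1 / D) * (D * (6 / D)) := mul_le_mul_of_nonneg_left h2 (by positivity)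
      _ = 6 / D := by field_simp
  refine ⟨part1, ?_⟩
  -- part 2
  have h4 : p 4 1 1 = (1 / D) * ∑ z ∈ S, p 3 1 z := by
    rw [hCK]
    congr 1
    have := sum_inv_of_symm S hsymm (fun s => p 3 1 s)
    simpa using this
  rw [h4]
  calc (1 / D : ℝ) * ∑ z ∈ S, p 3 1 z ≤ (1 / D) * (6 / D) :=
        mul_le_mul_of_nonneg_left part1 (by positivity)
    _ = 6 / (D : ℝ) ^ 2 := by field_simp
end

section
/- Let Γ be a group with finite symmetric minimal generating set S of size D, and for n ≥ 1 let S_n denote the set of elements of the sphere of radius n around the identity in Cay(Γ,S) expressible as words g_1 g_2 ⋯ g_n with g_i ∈ S and g_i ∉ {g_j, g_j^{-1}} for all i ≠ j. Then every element v = g_1⋯g_n ∈ S_n has at least D - 2n right-neighbours v g_{n+1} lying in S_{n+1}. -/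
/-- `indepSphere S n` is the set of elements of the sphere of radius `n`
expressible as words `g₁ ⋯ g_n` whose letters are pairwise distinct and
pairwise not inverse to each other. -/
def indepSphere {Γ : Type u} [Group Γ] (S : Finset Γ) (n : ℕ) : Set Γ :=
  {x | x ∉ cayleyBall S (n - 1) ∧
    ∃ g : Fin n → Γ, (∀ i, g i ∈ S) ∧
      (∀ i j, i ≠ j → g i ≠ g j ∧ g i ≠ (g j)⁻¹) ∧ (List.ofFn g).prod = x}

/-!
In a minimal generating set no generator `t` lies in the subgroup generated by the others.
Hence if `t` occurs exactly once in a word `A t B` and `l` is a word with the same value but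
without the letter `t`, then `t = A⁻¹ l B⁻¹` is a product of the other generators, which is
impossible. So every letter of a word without repeated letters occurs in every word with the
same value, and such a word is geodesic. Appending to `v = g₁ ⋯ gₙ` a generator
`s ∉ {gᵢ, gᵢ⁻¹}` keeps the letters distinct and mutually non-inverse, so `v s` lies in the next
sphere; at most `2n` generators are excluded.
-/

open Finset

namespace Subgroup

variable {Γ : Type*} [Group Γ]

def IsIrredundant (S : Set Γ) : Prop :=
  ∀ t ∈ S, t ∉ closure (S \ {t})

theorem isIrredundant_of_minimal {S : Finset Γ} (hgen : closure (S : Set Γ) = ⊤)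
    (hmin : ∀ T : Finset Γ, T ⊂ S → closure (T : Set Γ) ≠ ⊤) : IsIrredundant (S : Set Γ) := by
  classical
  intro t ht htmem
  apply hmin (S.erase t) (erase_ssubset ht)
  rw [eq_top_iff, ← hgen, closure_le, coe_erase]
  intro x hx
  by_cases hxt : x = t
  · exact hxt ▸ htmem
  · exact subset_closure ⟨hx, hxt⟩

theorem list_prod_mem_closure_diff_singleton {S : Set Γ} {l : List Γ} (hl : ∀ x ∈ l, x ∈ S)
    {t : Γ} (ht : t ∉ l) : l.prod ∈ closure (S \ {t}) :=
  list_prod_mem fun x hx ↦ subset_closure ⟨hl x hx, fun hxt ↦ ht (hxt ▸ hx)⟩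

theorem IsIrredundant.mem_of_nodup_of_prod_eq {S : Set Γ} (hS : IsIrredundant S)
    {w l : List Γ} (hw : ∀ x ∈ w, x ∈ S) (hl : ∀ x ∈ l, x ∈ S) (hnd : w.Nodup)
    (hprod : w.prod = l.prod) {t : Γ} (ht : t ∈ w) : t ∈ l := by
  by_contra htl
  obtain ⟨A, B, rfl⟩ := List.append_of_mem ht
  obtain ⟨htAB, -⟩ := List.nodup_cons.mp (List.nodup_middle.mp hnd)
  have hA := list_prod_mem_closure_diff_singleton (S := S)
    (fun x hx ↦ hw x (List.mem_append_left _ hx)) fun h ↦ htAB (List.mem_append_left _ h)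
  have hB := list_prod_mem_closure_diff_singleton (S := S)
    (fun x hx ↦ hw x (List.mem_append_right _ (List.mem_cons_of_mem _ hx)))
    fun h ↦ htAB (List.mem_append_right _ h)
  have hl' := list_prod_mem_closure_diff_singleton hl htl
  have ht_eq : t = A.prod⁻¹ * l.prod * B.prod⁻¹ := by
    rw [← hprod, List.prod_append, List.prod_cons]
    group
  have ht_mem := mul_mem (mul_mem (inv_mem hA) hl') (inv_mem hB)
  rw [← ht_eq] at ht_mem
  exact hS t (hw t ht) ht_mem

theorem IsIrredundant.length_le_of_nodup_of_prod_eq {S : Set Γ} (hS : IsIrredundant S)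
    {w l : List Γ} (hw : ∀ x ∈ w, x ∈ S) (hl : ∀ x ∈ l, x ∈ S) (hnd : w.Nodup)
    (hprod : w.prod = l.prod) : w.length ≤ l.length :=
  hnd.length_le_of_subset fun _ ↦ hS.mem_of_nodup_of_prod_eq hw hl hnd hprod

theorem IsIrredundant.prod_notMem_cayleyBall {S : Finset Γ} (hS : IsIrredundant (S : Set Γ))
    {w : List Γ} (hw : ∀ x ∈ w, x ∈ S) (hnd : w.Nodup) {n : ℕ} (hn : n < w.length) :
    w.prod ∉ cayleyBall S n := by
  rintro ⟨l, hl, hlen, hprod⟩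
  have := hS.length_le_of_nodup_of_prod_eq hw hl hnd hprod.symm
  omega

end Subgroup

open Subgroup

theorem Fin.snoc_pairwise_ne_and_ne_inv {Γ : Type*} [Group Γ] {n : ℕ} {g : Fin n → Γ}
    (hind : ∀ i j, i ≠ j → g i ≠ g j ∧ g i ≠ (g j)⁻¹) {s : Γ}
    (hs : ∀ i, g i ≠ s) (hs_inv : ∀ i, (g i)⁻¹ ≠ s) :
    ∀ i j, i ≠ j → (Fin.snoc g s : Fin (n + 1) → Γ) i ≠ (Fin.snoc g s : Fin (n + 1) → Γ) j ∧
      (Fin.snoc g s : Fin (n + 1) → Γ) i ≠ ((Fin.snoc g s : Fin (n + 1) → Γ) j)⁻¹ := by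
  intro i j hij
  induction i using Fin.lastCases <;> induction j using Fin.lastCases
  · exact absurd rfl hij
  case last.cast j =>
    simp only [Fin.snoc_last, Fin.snoc_castSucc]
    exact ⟨(hs j).symm, fun h ↦ hs_inv j h.symm⟩
  case cast.last i =>
    simp only [Fin.snoc_last, Fin.snoc_castSucc]
    exact ⟨hs i, fun h ↦ hs_inv i (by rw [h, inv_inv])⟩
  case cast.cast i j =>
    simp only [Fin.snoc_castSucc]
    exact hind i j (ne_of_apply_ne Fin.castSucc hij)

theorem Subgroup.IsIrredundant.prod_ofFn_mul_mem_indepSphere_succ {Γ : Type*} [Group Γ]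
    {S : Finset Γ} (hS : IsIrredundant (S : Set Γ))
    {n : ℕ} {g : Fin n → Γ} (hgS : ∀ i, g i ∈ S)
    (hind : ∀ i j, i ≠ j → g i ≠ g j ∧ g i ≠ (g j)⁻¹) {s : Γ} (hs : s ∈ S)
    (hs_ne : ∀ i, g i ≠ s) (hs_inv : ∀ i, (g i)⁻¹ ≠ s) :
    (List.ofFn g).prod * s ∈ indepSphere S (n + 1) := by
  set g' : Fin (n + 1) → Γ := Fin.snoc g s
  have hind' := Fin.snoc_pairwise_ne_and_ne_inv hind hs_ne hs_inv
  have hg'S : ∀ i, g' i ∈ S := fun i ↦ by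
    induction i using Fin.lastCases <;> simp [g', hs, hgS]
  have hprod : (List.ofFn g').prod = (List.ofFn g).prod * s := by
    simp only [g', List.ofFn_succ', Fin.snoc_castSucc, Fin.snoc_last, List.concat_eq_append,
      List.prod_append, List.prod_singleton]
  refine ⟨?_, g', hg'S, hind', hprod⟩
  rw [← hprod]
  refine hS.prod_notMem_cayleyBall ?_ ?_ (by simp)
  · exact List.forall_mem_ofFn_iff.mpr hg'S
  · exact List.nodup_ofFn.mpr fun i j hij ↦ by_contra fun hne ↦ (hind' i j hne).1 hij

theorem indepSphere_expansion_general
    {Γ : Type*} [Group Γ] (S : Finset Γ) (D : ℕ) (hD : S.card = D)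
    (hgen : Subgroup.closure (S : Set Γ) = ⊤)
    (hmin : ∀ T : Finset Γ, T ⊂ S → Subgroup.closure (T : Set Γ) ≠ ⊤)
    (n : ℕ) (v : Γ) (hv : v ∈ indepSphere S n) :
    (D : ℤ) - 2 * n ≤ (Set.ncard {s : Γ | s ∈ S ∧ v * s ∈ indepSphere S (n + 1)} : ℤ) := by
  classical
  obtain ⟨-, g, hgS, hind, rfl⟩ := hv
  have hS := isIrredundant_of_minimal hgen hmin
  set bad := univ.image g ∪ univ.image fun i ↦ (g i)⁻¹
  have hbad : bad.card ≤ 2 * n := by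
    grw [card_union_le, card_image_le, card_image_le]
    simp only [card_univ, Fintype.card_fin]
    omega
  have hgood : ((S \ bad : Finset Γ) : Set Γ) ⊆
      {s | s ∈ S ∧ (List.ofFn g).prod * s ∈ indepSphere S (n + 1)} := by
    intro s hs
    simp only [bad, coe_sdiff, Set.mem_sdiff, mem_coe, mem_union, mem_image, mem_univ,
      true_and, not_or, not_exists] at hs
    exact ⟨hs.1, hS.prod_ofFn_mul_mem_indepSphere_succ hgS hind hs.1 hs.2.1 hs.2.2⟩
  have hcount := Set.ncard_le_ncard hgood (S.finite_toSet.subset fun _ h ↦ h.1)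
  rw [Set.ncard_coe_finset] at hcount
  have hsdiff := le_card_sdiff bad S
  omega

/-- Every element of `indepSphere S n` has at least `D - 2n` right-neighbours
in `indepSphere S (n+1)`. -/
theorem indepSphere_expansion
    {Γ : Type*} [Group Γ] (S : Finset Γ) (D : ℕ) (hD : S.card = D)
    (hsymm : ∀ s ∈ S, s⁻¹ ∈ S)
    (hgen : Subgroup.closure (S : Set Γ) = ⊤)
    (hmin : ∀ T : Finset Γ, T ⊂ S → Subgroup.closure (T : Set Γ) ≠ ⊤)
    (n : ℕ) (hn : 1 ≤ n) (v : Γ) (hv : v ∈ indepSphere S n) :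
    (D : ℤ) - 2 * n ≤ (Set.ncard {s : Γ | s ∈ S ∧ v * s ∈ indepSphere S (n + 1)} : ℤ) :=
  indepSphere_expansion_general S D hD hgen hmin n v hv
end
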